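/- Let (A_b, f_b) be the one-dimensional double extension of a quadratic Lie algebra (A, f) by an f-skew-symmetric derivation d. Then A_b is 2-step nilpotent if and only if im d + [A,A] is nonzero and im d + [A,A] ⊆ Z(A) ∩ ker d. -/
import Mathlib


open Module

variable {K A : Type*}

/-- The bracket of the one-dimensional double extension `A_b = Kb ⊕ A ⊕ Kβ` of `(A,f)`
by an `f`-skew-symmetric derivation `d`. -/
def odeBr [Field K] [LieRing A] [LieAlgebra K A]
    (f : A →ₗ[K] A →ₗ[K] K) (d : A →ₗ[K] A)
    (X Y : K × A × K) : K × A × K :=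
  (0, X.1 • d Y.2.1 - Y.1 • d X.2.1 + ⁅X.2.1, Y.2.1⁆, f (d X.2.1) Y.2.1)

/-- The derived algebra of a Lie algebra, as a submodule. -/
def derivedSub (K A : Type*) [Field K] [LieRing A] [LieAlgebra K A] : Submodule K A :=
  Submodule.span K {z | ∃ x y : A, z = ⁅x, y⁆}

/-- The one-dimensional double extension `A_b` of `(A, f)` by `d` is 2-step nilpotent
if and only if `im d + [A,A]` is nonzero and `im d + [A,A] ⊆ Z(A) ∩ ker d`. -/
theorem stmt4 [Field K] [CharZero K] [LieRing A] [LieAlgebra K A] [FiniteDimensional K A]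
    (f : A →ₗ[K] A →ₗ[K] K)
    (hsymm : ∀ x y, f x y = f y x)
    (hnd : ∀ x, (∀ y, f x y = 0) → x = 0)
    (hinv : ∀ x y z, f ⁅x, y⁆ z = f x ⁅y, z⁆)
    (d : A →ₗ[K] A)
    (hder : ∀ x y : A, d ⁅x, y⁆ = ⁅d x, y⁆ + ⁅x, d y⁆)
    (hdskew : ∀ x y : A, f (d x) y + f x (d y) = 0) :
    ((∀ X Y Z : K × A × K, odeBr f d X (odeBr f d Y Z) = 0) ∧
     (∃ X Y : K × A × K, odeBr f d X Y ≠ 0))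
    ↔
    ((LinearMap.range d ⊔ derivedSub K A ≠ ⊥) ∧
     (∀ a : A, a ∈ LinearMap.range d ⊔ derivedSub K A →
        (∀ y : A, ⁅a, y⁆ = 0) ∧ d a = 0)) := by
  constructor
  · rintro ⟨h1, X₀, Y₀, hXY⟩
    have key : ∀ y z : A, d (d z + ⁅y, z⁆) = 0 ∧ ∀ x : A, ⁅x, d z + ⁅y, z⁆⁆ = 0 := by
      intro y z
      constructor
      · have h := congrArg (fun p : K × A × K => p.2.1)
          (h1 (1, 0, 0) (1, y, 0) (0, z, 0))
        simpa [odeBr] using h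
      · intro x
        have h := congrArg (fun p : K × A × K => p.2.1)
          (h1 (0, x, 0) (1, y, 0) (0, z, 0))
        simpa [odeBr] using h
    have hdd : ∀ z : A, d (d z) = 0 := fun z => by simpa using (key 0 z).1
    have hcd : ∀ x z : A, ⁅x, d z⁆ = 0 := fun x z => by simpa using (key 0 z).2 x
    have hdb : ∀ y z : A, d ⁅y, z⁆ = 0 := by
      intro y z
      have := (key y z).1
      rw [map_add, hdd] at this
      simpa using this
    have hcb : ∀ x y z : A, ⁅x, ⁅y, z⁆⁆ = 0 := by
      intro x y z
      have := (key y z).2 x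
      rw [lie_add, hcd] at this
      simpa using this
    set S : Submodule K A :=
      { carrier := {a | (∀ y : A, ⁅a, y⁆ = 0) ∧ d a = 0}
        add_mem' := by
          rintro a b ⟨ha1, ha2⟩ ⟨hb1, hb2⟩
          exact ⟨fun y => by rw [add_lie, ha1, hb1, add_zero],
            by rw [map_add, ha2, hb2, add_zero]⟩
        zero_mem' := ⟨fun y => zero_lie y, map_zero d⟩
        smul_mem' := by
          rintro c a ⟨ha1, ha2⟩
          exact ⟨fun y => by rw [smul_lie, ha1, smul_zero],
            by rw [map_smul, ha2, smul_zero]⟩ } with hS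
    have hle : LinearMap.range d ⊔ derivedSub K A ≤ S := by
      apply sup_le
      · rintro _ ⟨z, rfl⟩
        exact ⟨fun y => by rw [← lie_skew, hcd, neg_zero], hdd z⟩
      · rw [derivedSub, Submodule.span_le]
        rintro _ ⟨y, z, rfl⟩
        exact ⟨fun x => by rw [← lie_skew, hcb, neg_zero], hdb y z⟩
    refine ⟨?_, fun a ha => hle ha⟩
    intro hbot
    apply hXY
    have hd0 : ∀ z : A, d z = 0 := by
      intro z
      have : d z ∈ LinearMap.range d ⊔ derivedSub K A :=
        Submodule.mem_sup_left ⟨z, rfl⟩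
      rw [hbot] at this
      simpa using this
    have hb0 : ∀ y z : A, ⁅y, z⁆ = 0 := by
      intro y z
      have : ⁅y, z⁆ ∈ LinearMap.range d ⊔ derivedSub K A :=
        Submodule.mem_sup_right (Submodule.subset_span ⟨y, z, rfl⟩)
      rw [hbot] at this
      simpa using this
    simp [odeBr, hd0, hb0, Prod.ext_iff]
  · rintro ⟨hne, hC⟩
    constructor
    · intro X Y Z
      set w := Y.1 • d Z.2.1 - Z.1 • d Y.2.1 + ⁅Y.2.1, Z.2.1⁆ with hw
      have hwW : w ∈ LinearMap.range d ⊔ derivedSub K A := by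
        apply add_mem
        · exact sub_mem
            (Submodule.mem_sup_left (Submodule.smul_mem _ _ ⟨Z.2.1, rfl⟩))
            (Submodule.mem_sup_left (Submodule.smul_mem _ _ ⟨Y.2.1, rfl⟩))
        · exact Submodule.mem_sup_right (Submodule.subset_span ⟨Y.2.1, Z.2.1, rfl⟩)
      obtain ⟨hc0, hd0⟩ := hC w hwW
      have h2 : ⁅X.2.1, w⁆ = 0 := by rw [← lie_skew, hc0 X.2.1, neg_zero]
      have h3 : f (d X.2.1) w = 0 := by
        have := hdskew X.2.1 w
        rw [hd0] at this
        simpa using this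
      show (0, X.1 • d w - (0 : K) • d X.2.1 + ⁅X.2.1, w⁆, f (d X.2.1) w)
          = (0 : K × A × K)
      rw [hd0, h2, h3]
      simp [Prod.ext_iff]
    · by_cases hd0 : ∀ z : A, d z = 0
      · by_cases hb0 : ∀ y z : A, ⁅y, z⁆ = 0
        · exfalso
          apply hne
          rw [eq_bot_iff]
          apply sup_le
          · rintro _ ⟨z, rfl⟩
            simp [hd0]
          · rw [derivedSub, Submodule.span_le]
            rintro _ ⟨y, z, rfl⟩
            simp [hb0]
        · push_neg at hb0
          obtain ⟨y, z, h⟩ := hb0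
          refine ⟨(0, y, 0), (0, z, 0), fun he => h ?_⟩
          have := congrArg (fun p : K × A × K => p.2.1) he
          simpa [odeBr] using this
      · push_neg at hd0
        obtain ⟨z, hz⟩ := hd0
        refine ⟨(1, 0, 0), (0, z, 0), fun he => hz ?_⟩
        have := congrArg (fun p : K × A × K => p.2.1) he
        simpa [odeBr] using this
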